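/- arXiv:2203.05451 — 5 statements merged into one kernel-verified Lean document; each statement's English description precedes it below -/
import Mathlib

section
/- For every odd positive integer n, if the binary digit sum of 3n equals 2, then either n = 1 or the binary expansion of n has the form (10)^ℓ 11 for some ℓ ≥ 0; equivalently, n = 1 or n = (2·4^(ℓ+1) + 1)/3 for some ℓ ≥ 0. -/
/-- binary digit sum -/
def s (n : ℕ) : ℕ := (Nat.digits 2 n).sum

lemma s_def (t : ℕ) (ht : 0 < t) : s t = t % 2 + s (t / 2) := by
  unfold s
  rw [Nat.digits_def' (by norm_num : (1:ℕ) < 2) ht]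
  simp [List.sum_cons]

lemma s_zero_iff : ∀ t : ℕ, s t = 0 → t = 0 := by
  intro t
  induction t using Nat.strong_induction_on with
  | _ t ih =>
    intro h
    by_contra ht
    have ht' : 0 < t := Nat.pos_of_ne_zero ht
    rw [s_def t ht'] at h
    have h1 : t % 2 = 0 := by omega
    have h2 : s (t / 2) = 0 := by omega
    have := ih (t / 2) (by omega) h2
    omega

lemma pow_of_s_one : ∀ t : ℕ, s t = 1 → ∃ j, t = 2 ^ j := by
  intro t
  induction t using Nat.strong_induction_on with
  | _ t ih =>
    intro h
    have ht : 0 < t := by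
      rcases Nat.eq_zero_or_pos t with h0 | h0
      · simp [h0, s] at h
      · exact h0
    rw [s_def t ht] at h
    rcases Nat.even_or_odd t with he | ho
    · have h1 : t % 2 = 0 := Nat.even_iff.mp he
      have h2 : s (t / 2) = 1 := by omega
      obtain ⟨j, hj⟩ := ih (t / 2) (by omega) h2
      exact ⟨j + 1, by rw [pow_succ]; omega⟩
    · have h1 : t % 2 = 1 := Nat.odd_iff.mp ho
      have h2 : s (t / 2) = 0 := by omega
      have := s_zero_iff (t / 2) h2
      exact ⟨0, by omega⟩

theorem stmt_0 (n : ℕ) (hn : 0 < n) (hodd : Odd n) (h : s (3 * n) = 2) :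
    n = 1 ∨ ∃ ℓ : ℕ, 3 * n = 2 ^ (2 * ℓ + 3) + 1 := by
  have hm : 0 < 3 * n := by omega
  have hmo : (3 * n) % 2 = 1 := by
    obtain ⟨k, hk⟩ := hodd; omega
  rw [s_def _ hm, hmo] at h
  obtain ⟨j, hj⟩ := pow_of_s_one (3 * n / 2) (by omega)
  have hmval : 3 * n = 2 ^ (j + 1) + 1 := by
    rw [pow_succ]; omega
  -- j + 1 must be odd since 3 ∣ 2^(j+1) + 1
  have hdvd : 2 ^ (j + 1) % 3 = 2 := by
    have : (2 ^ (j + 1) + 1) % 3 = 0 := by omega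
    omega
  have hjodd : Odd (j + 1) := by
    by_contra hev
    rw [Nat.not_odd_iff_even] at hev
    obtain ⟨a, ha⟩ := hev
    have : 2 ^ (j + 1) % 3 = 1 := by
      have h4 : (2:ℕ) ^ (a + a) = 4 ^ a := by
        rw [← two_mul, pow_mul]; norm_num
      rw [ha, h4, Nat.pow_mod]; norm_num
    omega
  obtain ⟨a, ha⟩ := hjodd
  rcases Nat.eq_zero_or_pos a with h0 | h0
  · left
    have : 3 * n = 3 := by rw [hmval, ha, h0]; norm_num
    omega
  · right
    have he : 2 * (a - 1) + 3 = 2 * a + 1 := by omega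
    exact ⟨a - 1, by rw [hmval, ha, he]⟩
end

section
/- If n is the integer whose binary expansion is (10)^ℓ 11 with ℓ ≥ 2, then the binary digit sum of n^2 is at least 7. -/
lemma s_add_pow_mul {a m K : ℕ} (ha : a < 2 ^ K) (hm : m ≠ 0) :
    s (a + 2 ^ K * m) = s a + s m := by
  have hlen : (Nat.digits 2 a).length ≤ K := by
    rcases eq_or_ne a 0 with rfl | h0
    · simp
    · rw [Nat.digits_len 2 a one_lt_two h0]
      have := Nat.log_lt_of_lt_pow h0 ha
      omega
  obtain ⟨j, hj⟩ := Nat.exists_eq_add_of_le hlen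
  have hd := Nat.digits_append_zeroes_append_digits (b := 2) (k := j) (m := m) (n := a)
    one_lt_two (Nat.pos_of_ne_zero hm)
  unfold s
  rw [hj, ← hd]
  simp [List.sum_append]

lemma ex_a (k : ℕ) : ∃ a : ℕ, 3 * a + 1 = 2 ^ (2 * k) := by
  induction k with
  | zero => exact ⟨0, rfl⟩
  | succ k ih =>
    obtain ⟨a, ha⟩ := ih
    exact ⟨4 * a + 1, by rw [show 2 * (k + 1) = 2 * k + 2 by ring, pow_add]; omega⟩

lemma ex_b (k : ℕ) : ∃ b : ℕ, 3 * b = 2 ^ (2 * k + 1) + 1 := by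
  induction k with
  | zero => exact ⟨1, rfl⟩
  | succ k ih =>
    obtain ⟨b, hb⟩ := ih
    exact ⟨4 * b - 1, by rw [show 2 * (k + 1) + 1 = (2 * k + 1) + 2 by ring, pow_add]; omega⟩

theorem stmt_2 (ℓ n : ℕ) (hℓ : 2 ≤ ℓ) (h : 3 * n = 2 ^ (2 * ℓ + 3) + 1) :
    7 ≤ s (n ^ 2) := by
  rcases eq_or_lt_of_le hℓ with rfl | hℓ3
  · -- ℓ = 2, n = 43
    have hn : n = 43 := by norm_num at h; omega
    subst hn
    have key : (43 : ℕ) ^ 2 = 57 + 2 ^ 8 * 7 := by norm_num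
    rw [key, s_add_pow_mul (by norm_num) (by norm_num)]
    have h57 : s 57 = 4 := by simp [s]
    have h7 : s 7 = 3 := by simp [s]
    omega
  · obtain ⟨k, rfl⟩ : ∃ k, ℓ = k + 3 := ⟨ℓ - 3, by omega⟩
    obtain ⟨a, ha⟩ := ex_a (k + 1)
    rw [show 2 * (k + 1) = 2 * k + 2 by ring] at ha
    obtain ⟨b, hb⟩ := ex_b k
    have h9M : 9 * (a * b) + 1 = 2 ^ (4 * k + 3) + 2 ^ (2 * k + 1) := by
      zify at ha hb ⊢
      linear_combination (3 * (b : ℤ)) * ha + ((2 : ℤ) ^ (2 * k + 2) - 1) * hb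
    have hexp : 2 * (k + 3) + 3 = 2 * k + 9 := by ring
    rw [hexp] at h
    have h81 : 9 * n ^ 2 = 2 ^ (4 * k + 18) + 2 ^ (2 * k + 10) + 1 := by
      zify at h ⊢
      linear_combination (3 * (n : ℤ) + 2 ^ (2 * k + 9) + 1) * h
    have key : n ^ 2 = 57 + 2 ^ 9 * (a * b + 2 ^ (4 * k + 3) * 7) := by
      apply Nat.eq_of_mul_eq_mul_left (show 0 < 9 by norm_num)
      zify at h9M h81 ⊢
      linear_combination h81 - (2 : ℤ) ^ 9 * h9M
    have hMlt : a * b < 2 ^ (4 * k + 3) := by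
      have hle : 2 ^ (2 * k + 1) ≤ 2 ^ (4 * k + 3) :=
        Nat.pow_le_pow_right (by norm_num) (by omega)
      omega
    have hR : a * b + 2 ^ (4 * k + 3) * 7 ≠ 0 := by positivity
    rw [key, s_add_pow_mul (by norm_num) hR, s_add_pow_mul hMlt (by norm_num)]
    have h57 : s 57 = 4 := by simp [s]
    have h7 : s 7 = 3 := by simp [s]
    omega
end

section
/- For all ℓ ≥ 3, the integer n = 1 + 2^ℓ + 2^(2ℓ-1) satisfies s(n^2) = 5, where s denotes the binary digit sum. -/
lemma s_split (n m k : ℕ) (hn : n < 2 ^ k) : s (n + 2 ^ k * m) = s n + s m := by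
  rcases Nat.eq_zero_or_pos m with rfl | hm
  · simp [s]
  have hlen : (Nat.digits 2 n).length ≤ k := by
    rcases Nat.eq_zero_or_pos n with rfl | hn0
    · simp
    · rw [Nat.digits_len 2 n (by norm_num) hn0.ne']
      exact Nat.log_lt_of_lt_pow hn0.ne' hn
  have h := Nat.digits_append_zeroes_append_digits (b := 2) (k := k - (Nat.digits 2 n).length)
    (m := m) (n := n) (by norm_num) hm
  rw [Nat.add_sub_cancel' hlen] at h
  unfold s
  rw [← h]
  simp

theorem stmt_5 (ℓ : ℕ) (hℓ : 3 ≤ ℓ) : s ((1 + 2 ^ ℓ + 2 ^ (2 * ℓ - 1)) ^ 2) = 5 := by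
  obtain ⟨m, rfl⟩ : ∃ m, ℓ = m + 3 := ⟨ℓ - 3, by omega⟩
  have key : (1 + 2 ^ (m + 3) + 2 ^ (2 * (m + 3) - 1)) ^ 2 =
      1 + 2 ^ (m + 4) * (1 + 2 ^ (m + 3) * (1 + 2 ^ (m + 2) * (1 + 2 ^ (m + 1)))) := by
    have : 2 * (m + 3) - 1 = 2 * m + 5 := by omega
    rw [this]; ring
  have h1 : ∀ k : ℕ, (1 : ℕ) < 2 ^ (k + 1) := fun k =>
    Nat.one_lt_two_pow (by omega)
  rw [key, s_split _ _ _ (h1 (m + 3)), s_split _ _ _ (h1 (m + 2)),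
    s_split _ _ _ (h1 (m + 1))]
  have hlast : s (1 + 2 ^ (m + 1)) = 2 := by
    have := s_split 1 1 (m + 1) (h1 m)
    simpa [s] using this
  have hs1 : s 1 = 1 := by simp [s]
  rw [hs1, hlast]
end

section
/- For every integer t ≥ 15, the integer n = 111·2^t + 111 satisfies s(n) = s(n^2) = 12, where s is the binary digit sum. -/
theorem Nat.digits_sum_add_base_pow_mul {b k m n : ℕ} (hb : 1 < b) (hn : n < b ^ k) :
    (b.digits (n + b ^ k * m)).sum = (b.digits n).sum + (b.digits m).sum := by
  rcases Nat.eq_zero_or_pos m with rfl | hm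
  · simp
  have hlen : (b.digits n).length ≤ k := (Nat.digits_length_le_iff hb n).mpr hn
  have hsplit := Nat.digits_append_zeroes_append_digits (k := k - (b.digits n).length) (n := n) hb hm
  rw [Nat.add_sub_cancel' hlen] at hsplit
  simp [← hsplit]

lemma s_add_two_pow_mul {k m n : ℕ} (hn : n < 2 ^ k) : s (n + 2 ^ k * m) = s n + s m :=
  Nat.digits_sum_add_base_pow_mul one_lt_two hn

theorem stmt_6 (t : ℕ) (ht : 15 ≤ t) :
    s (111 * 2 ^ t + 111) = 12 ∧ s ((111 * 2 ^ t + 111) ^ 2) = 12 := by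
  have hpow : 2 ^ 15 ≤ 2 ^ t := Nat.pow_le_pow_right two_pos ht
  have h111 : s 111 = 6 := by norm_num [s]
  have h12321 : s 12321 = 4 := by norm_num [s]
  have h24642 : s 24642 = 4 := by norm_num [s]
  constructor
  · rw [show 111 * 2 ^ t + 111 = 111 + 2 ^ t * 111 by ring, s_add_two_pow_mul (by omega), h111]
  · rw [show (111 * 2 ^ t + 111) ^ 2 = 12321 + 2 ^ t * (24642 + 2 ^ t * 12321) by ring,
      s_add_two_pow_mul (by omega), s_add_two_pow_mul (by omega), h12321, h24642]
end

section
/- If a and b are odd positive integers with binary digit sums s(a) = ℓ ≥ 2 and s(b) = m ≥ 2, and if the binary digit sum of the product ab equals 2, then ab < 2^(2ℓm − 4). -/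
/-!
Expand `a * b` as the sum of the `ℓ * m` powers `2 ^ (i + j)`, `i` a bit of `a` and `j` a bit of
`b`. Adding these powers column by column, the total number of carries is `ℓ * m - s (a * b)`
(Legendre's formula `∑ ⌊N / 2 ^ (t + 1)⌋ = N - s N`, applied to `a * b` and to each summand).
Being odd with digit sum `2`, `a * b = 2 ^ k + 1`. If `i > 0` is a bit of `a` and `j > 0` one of
`b`, then `(2 ^ i + 1) * (2 ^ j + 1) ≤ a * b` gives `i + j < k`. For `g = min i j` and
`g ≤ t < k`, the columns up to `t` hold two summands (`2 ^ 0` and `2 ^ g`), yet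
`a * b ≡ 1 [MOD 2 ^ (t + 1)]`, so column `t` produces a carry. Thus `k - g ≤ ℓ * m - 2` with
`2 * g < k`, i.e. `k + 1 ≤ 2 * ℓ * m - 4`.
-/

open Finset Nat

theorem s_two_mul (n : ℕ) : s (2 * n) = s n := by
  rcases n.eq_zero_or_pos with rfl | hn
  · rfl
  · have h1 : 2 * n % 2 = 0 := by omega
    have h2 : 2 * n / 2 = n := by omega
    simp only [s, digits_def' one_lt_two (by omega : 0 < 2 * n), h1, h2, List.sum_cons, zero_add]

theorem s_two_mul_add_one (n : ℕ) : s (2 * n + 1) = s n + 1 := by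
  have h1 : (2 * n + 1) % 2 = 1 := by omega
  have h2 : (2 * n + 1) / 2 = n := by omega
  rw [s, digits_def' one_lt_two (by omega), h1, h2, List.sum_cons, add_comm, s]

theorem length_bitIndices (n : ℕ) : n.bitIndices.length = s n := by
  induction n using Nat.binaryRec with
  | zero => rfl
  | bit b n ih =>
    cases b
    · rw [bit_false, bitIndices_two_mul, List.length_map, ih, s_two_mul]
    · rw [bit_true, bitIndices_two_mul_add_one, List.length_cons, List.length_map, ih,
        s_two_mul_add_one]

theorem card_toFinset_bitIndices (n : ℕ) : #n.bitIndices.toFinset = s n := by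
  rw [List.toFinset_card_of_nodup bitIndices_nodup, length_bitIndices]

theorem s_two_pow (k : ℕ) : s (2 ^ k) = 1 := by
  rw [← length_bitIndices, bitIndices_two_pow, List.length_singleton]

theorem exists_eq_two_pow_add_one_of_s_eq_two {n : ℕ} (hn : Odd n) (h : s n = 2) :
    ∃ k, 0 < k ∧ n = 2 ^ k + 1 := by
  obtain ⟨j, rfl⟩ := hn
  rw [s_two_mul_add_one, ← length_bitIndices] at h
  obtain ⟨i, hi⟩ := List.length_eq_one_iff.1 (by omega : j.bitIndices.length = 1)
  refine ⟨i + 1, i.succ_pos, ?_⟩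
  rw [← sum_map_two_pow_bitIndices j, hi]
  simp [pow_succ, mul_comm]

theorem exists_pos_testBit_of_two_le_s {n : ℕ} (h : 2 ≤ s n) : ∃ i, 0 < i ∧ n.testBit i := by
  have : n.bitIndices.toFinset.Nontrivial := by
    rw [← one_lt_card_iff_nontrivial, card_toFinset_bitIndices]; omega
  obtain ⟨i, hi, hi0⟩ := this.exists_ne 0
  exact ⟨i, Nat.pos_of_ne_zero hi0, by simpa using hi⟩

theorem two_pow_add_one_le_of_testBit {n i : ℕ} (hn : Odd n) (hi : 0 < i) (h : n.testBit i) :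
    2 ^ i + 1 ≤ n := by
  have hsub : ({i, 0} : Finset ℕ) ⊆ n.bitIndices.toFinset := by
    intro j hj
    rcases Finset.mem_insert.1 hj with rfl | hj
    · simpa using h
    · rw [Finset.mem_singleton.1 hj]
      simpa [Nat.testBit_zero, Nat.odd_iff] using hn
  calc 2 ^ i + 1 = ∑ j ∈ {i, 0}, 2 ^ j := by rw [sum_pair hi.ne']; rfl
    _ ≤ n := (sum_le_sum_of_subset hsub).trans_eq (sum_toFinset_bitIndices_two_pow n)

theorem sum_range_div_two_pow_succ {N L : ℕ} (hN : N < 2 ^ L) :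
    ∑ t ∈ range L, N / 2 ^ (t + 1) = N - s N := by
  rcases N.eq_zero_or_pos with rfl | hpos
  · simp
  have hlog : (log 2 N).succ ≤ L := log_lt_of_lt_pow hpos.ne' hN
  rw [← sum_subset (range_subset_range.2 hlog)]
  · simpa [s] using sub_one_mul_sum_log_div_pow_eq_sub_sum_digits (p := 2) N
  · intro t _ ht
    refine Nat.div_eq_of_lt ((lt_pow_succ_log_self one_lt_two N).trans_le ?_)
    exact Nat.pow_le_pow_right two_pos (by simp at ht; omega)

section Carries

variable {ι : Type*} (E : Finset ι) (e : ι → ℕ)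

/-- The carry out of binary column `t` when the powers `2 ^ e p`, `p ∈ E`, are added:
the part of the sum lying in columns `0, …, t`, divided by `2 ^ (t + 1)`. -/
def carry (t : ℕ) : ℕ := (∑ p ∈ E, 2 ^ e p % 2 ^ (t + 1)) / 2 ^ (t + 1)

theorem sum_two_pow_div_two_pow_succ (t : ℕ) :
    (∑ p ∈ E, 2 ^ e p) / 2 ^ (t + 1) = carry E e t + ∑ p ∈ E, 2 ^ e p / 2 ^ (t + 1) := by
  conv_lhs => rw [← sum_congr rfl fun p _ => Nat.mod_add_div (2 ^ e p) (2 ^ (t + 1)),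
    sum_add_distrib, ← mul_sum, Nat.add_mul_div_left _ _ (by positivity)]
  rfl

theorem sum_two_pow_mod_two_pow_succ (t : ℕ) :
    (∑ p ∈ E, 2 ^ e p % 2 ^ (t + 1)) % 2 ^ (t + 1) = (∑ p ∈ E, 2 ^ e p) % 2 ^ (t + 1) :=
  (Finset.sum_nat_mod _ _ _).symm

theorem sum_range_carry_add_s {L : ℕ} (hL : ∑ p ∈ E, 2 ^ e p < 2 ^ L) :
    ∑ t ∈ range L, carry E e t + s (∑ p ∈ E, 2 ^ e p) = #E := by
  set N := ∑ p ∈ E, 2 ^ e p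
  have hle : ∀ p ∈ E, 2 ^ e p ≤ N := fun p hp =>
    single_le_sum (f := fun p => 2 ^ e p) (fun _ _ => Nat.zero_le _) hp
  have hsummands : ∑ t ∈ range L, ∑ p ∈ E, 2 ^ e p / 2 ^ (t + 1) = N - #E := by
    rw [sum_comm, sum_congr rfl fun p hp =>
      sum_range_div_two_pow_succ ((hle p hp).trans_lt hL)]
    simp only [s_two_pow]
    rw [sum_tsub_distrib _ fun _ _ => Nat.one_le_two_pow, card_eq_sum_ones]
  have hcard : #E ≤ N := by
    rw [card_eq_sum_ones]; exact sum_le_sum fun _ _ => Nat.one_le_two_pow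
  have hlegendre := sum_range_div_two_pow_succ hL
  rw [sum_congr rfl fun t _ => sum_two_pow_div_two_pow_succ E e t, sum_add_distrib,
    hsummands] at hlegendre
  have : s N ≤ N := Nat.digit_sum_le 2 N
  omega

theorem one_le_carry {t : ℕ} (hN : (∑ p ∈ E, 2 ^ e p) % 2 ^ (t + 1) = 1) {p q : ι}
    (hp : p ∈ E) (hq : q ∈ E) (hpq : p ≠ q) (hpt : e p ≤ t) (hqt : e q ≤ t) :
    1 ≤ carry E e t := by
  classical
  have hlow : 2 ≤ ∑ p ∈ E, 2 ^ e p % 2 ^ (t + 1) := by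
    have hsub : {p, q} ⊆ E := insert_subset hp (singleton_subset_iff.2 hq)
    calc 2 ≤ 2 ^ e p + 2 ^ e q := Nat.add_le_add Nat.one_le_two_pow Nat.one_le_two_pow
      _ = ∑ r ∈ {p, q}, 2 ^ e r % 2 ^ (t + 1) := by
        rw [sum_pair hpq, Nat.mod_eq_of_lt (Nat.pow_lt_pow_right one_lt_two (by omega)),
          Nat.mod_eq_of_lt (Nat.pow_lt_pow_right one_lt_two (by omega))]
      _ ≤ _ := sum_le_sum_of_subset hsub
  rw [← sum_two_pow_mod_two_pow_succ] at hN
  unfold carry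
  by_contra! h0
  rw [Nat.lt_one_iff, Nat.div_eq_zero_iff_lt (by positivity)] at h0
  rw [Nat.mod_eq_of_lt h0] at hN
  omega

theorem two_pow_add_one_mod_two_pow {k n : ℕ} (hn : 0 < n) (hnk : n ≤ k) :
    (2 ^ k + 1) % 2 ^ n = 1 := by
  rw [Nat.add_mod, Nat.mod_eq_zero_of_dvd (pow_dvd_pow 2 hnk), zero_add, Nat.mod_mod,
    Nat.mod_eq_of_lt (Nat.one_lt_two_pow hn.ne')]

theorem sub_le_sum_range_carry {k g L : ℕ} (hN : ∑ p ∈ E, 2 ^ e p = 2 ^ k + 1) (hkL : k ≤ L)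
    {p q : ι} (hp : p ∈ E) (hq : q ∈ E) (hpq : p ≠ q) (hpg : e p ≤ g) (hqg : e q ≤ g) :
    k - g ≤ ∑ t ∈ range L, carry E e t := by
  have hcarry : ∀ t ∈ Ico g k, 1 ≤ carry E e t := fun t ht => by
    rw [mem_Ico] at ht
    refine one_le_carry E e ?_ hp hq hpq (by omega) (by omega)
    rw [hN, two_pow_add_one_mod_two_pow (by omega) (by omega)]
  calc k - g = ∑ t ∈ Ico g k, 1 := by simp
    _ ≤ ∑ t ∈ Ico g k, carry E e t := sum_le_sum hcarry
    _ ≤ ∑ t ∈ range L, carry E e t :=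
      sum_le_sum_of_subset fun t ht => by simp only [mem_Ico, mem_range] at ht ⊢; omega

end Carries

theorem sum_product_bitIndices_two_pow_add (a b : ℕ) :
    ∑ p ∈ a.bitIndices.toFinset ×ˢ b.bitIndices.toFinset, 2 ^ (p.1 + p.2) = a * b := by
  simp_rw [sum_product, pow_add, ← mul_sum, ← sum_mul, sum_toFinset_bitIndices_two_pow]

theorem add_lt_of_mul_eq_two_pow_add_one {a b i j k : ℕ} (ha : Odd a) (hb : Odd b)
    (hi : 0 < i) (hia : a.testBit i) (hj : 0 < j) (hjb : b.testBit j) (hk : a * b = 2 ^ k + 1) :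
    i + j < k := by
  have := Nat.mul_le_mul (two_pow_add_one_le_of_testBit ha hi hia)
    (two_pow_add_one_le_of_testBit hb hj hjb)
  rw [hk] at this
  rw [← Nat.pow_lt_pow_iff_right one_lt_two, pow_add]
  nlinarith [Nat.one_le_two_pow (n := i), Nat.one_le_two_pow (n := j)]

theorem stmt_15_general (a b ℓ m : ℕ) (hao : Odd a) (hbo : Odd b)
    (hsa : s a = ℓ) (hsb : s b = m) (hℓ : 2 ≤ ℓ) (hm : 2 ≤ m)
    (h : s (a * b) = 2) : a * b < 2 ^ (2 * ℓ * m - 4) := by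
  obtain ⟨k, hk0, hk⟩ := exists_eq_two_pow_add_one_of_s_eq_two (hao.mul hbo) h
  set E := a.bitIndices.toFinset ×ˢ b.bitIndices.toFinset
  set e : ℕ × ℕ → ℕ := fun p => p.1 + p.2
  have hsum : ∑ p ∈ E, 2 ^ e p = a * b := sum_product_bitIndices_two_pow_add a b
  have hlt : a * b < 2 ^ (k + 1) := by
    rw [hk, pow_succ]
    have : 2 ≤ 2 ^ k := Nat.le_self_pow hk0.ne' 2
    omega
  have hcarries := sum_range_carry_add_s E e (hsum ▸ hlt)
  rw [hsum, h, card_product, card_toFinset_bitIndices, card_toFinset_bitIndices, hsa,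
    hsb] at hcarries
  obtain ⟨i, hi0, hia⟩ := exists_pos_testBit_of_two_le_s (hsa ▸ hℓ)
  obtain ⟨j, hj0, hjb⟩ := exists_pos_testBit_of_two_le_s (hsb ▸ hm)
  have hijk := add_lt_of_mul_eq_two_pow_add_one hao hbo hi0 hia hj0 hjb hk
  have h00 : (0, 0) ∈ E := by simp [E, Nat.odd_iff.1 hao, Nat.odd_iff.1 hbo]
  obtain ⟨q, hqE, hq0, hqe⟩ : ∃ q ∈ E, q ≠ (0, 0) ∧ e q = min i j := by
    rcases le_total i j with hij | hij
    · exact ⟨(i, 0), by simp [E, hia, Nat.odd_iff.1 hbo], by simp [hi0.ne'], by simp [e, hij]⟩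
    · exact ⟨(0, j), by simp [E, hjb, Nat.odd_iff.1 hao], by simp [hj0.ne'], by simp [e, hij]⟩
  have hcount := sub_le_sum_range_carry E e (hsum.trans hk) (Nat.le_add_right k 1) h00 hqE
    hq0.symm (Nat.zero_le _) hqe.le
  calc a * b < 2 ^ (k + 1) := hlt
    _ ≤ 2 ^ (2 * ℓ * m - 4) := Nat.pow_le_pow_right two_pos (by rw [mul_assoc]; omega)

theorem stmt_15 (a b ℓ m : ℕ) (ha : 0 < a) (hb : 0 < b) (hao : Odd a) (hbo : Odd b)
    (hsa : s a = ℓ) (hsb : s b = m) (hℓ : 2 ≤ ℓ) (hm : 2 ≤ m)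
    (h : s (a * b) = 2) : a * b < 2 ^ (2 * ℓ * m - 4) :=
  stmt_15_general a b ℓ m hao hbo hsa hsb hℓ hm h
end
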